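/- (Time-warping invariance of the tropical non-strict signature) Let z = (z_1, z_2, …) be a sequence of real numbers and 1 ≤ n ≤ T. Define τ_n(z) by (τ_n z)_j = z_j for j ≤ n and (τ_n z)_j = z_{j-1} for j > n (the entry z_n is repeated). Then ⟨ISS^{(idem)}_{0,T+1}(τ_n z), w⟩ = ⟨ISS^{(idem)}_{0,T}(z), w⟩ for every word w with letters in ℤ \ {0}. -/
import Mathlib


/-- The tropical (min-plus) **non-strict** iterated-sums signature coefficient
`⟨ISS^(idem)_{s,t}(z), w⟩ = min_{s < j_1 ≤ ⋯ ≤ j_k ≤ t} (w_1 z_{j_1} + ⋯ + w_k z_{j_k})`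
of a real sequence `z`, for a word `w` with integer letters; it takes values in
`ℝ ∪ {+∞}` (with `(+∞) + x = +∞`), is `0` on the empty word, and `+∞` when the index
set is empty. -/
noncomputable def tropISS (z : ℕ → ℝ) : ℕ → ℕ → List ℤ → WithTop ℝ
  | _, _, [] => 0
  | s, t, a :: w =>
      (Finset.Ioc s t).inf fun j => (((a : ℝ) * z j : ℝ) : WithTop ℝ) + tropISS z (j - 1) t w

/-- The time-warped sequence `τ_n(z)`: the entry `z_n` is repeated. -/
def timeWarp (n : ℕ) (z : ℕ → ℝ) : ℕ → ℝ :=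
  fun j => if j ≤ n then z j else z (j - 1)

lemma image_sub_one_Ioc (s T : ℕ) (hs : 1 ≤ s) :
    (Finset.Ioc s (T + 1)).image (fun j => j - 1) = Finset.Ioc (s - 1) T := by
  ext x
  simp only [Finset.mem_image, Finset.mem_Ioc]
  constructor
  · rintro ⟨j, ⟨h1, h2⟩, rfl⟩; omega
  · intro h; exact ⟨x + 1, ⟨by omega, by omega⟩, by omega⟩

lemma tropISS_warp_ge (z : ℕ → ℝ) (T n : ℕ) (hn : 1 ≤ n) (w : List ℤ) :
    ∀ s, n ≤ s → tropISS (timeWarp n z) s (T + 1) w = tropISS z (s - 1) T w := by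
  induction w with
  | nil => intro s _; rfl
  | cons a w ih =>
    intro s hs
    show (Finset.Ioc s (T + 1)).inf
        (fun j => (((a : ℝ) * timeWarp n z j : ℝ) : WithTop ℝ)
          + tropISS (timeWarp n z) (j - 1) (T + 1) w)
      = (Finset.Ioc (s - 1) T).inf
        (fun j => (((a : ℝ) * z j : ℝ) : WithTop ℝ) + tropISS z (j - 1) T w)
    rw [← image_sub_one_Ioc s T (le_trans hn hs), Finset.inf_image]
    refine Finset.inf_congr rfl ?_
    intro j hj
    simp only [Finset.mem_Ioc] at hj
    have hjn : ¬ j ≤ n := by omega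
    simp only [Function.comp, timeWarp, if_neg hjn]
    rw [ih (j - 1) (by omega)]

lemma tropISS_warp_lt (z : ℕ → ℝ) (T n : ℕ) (hn : 1 ≤ n) (hnT : n ≤ T) (w : List ℤ) :
    ∀ s, s < n → tropISS (timeWarp n z) s (T + 1) w = tropISS z s T w := by
  induction w with
  | nil => intro s _; rfl
  | cons a w ih =>
    intro s hsn
    show (Finset.Ioc s (T + 1)).inf
        (fun j => (((a : ℝ) * timeWarp n z j : ℝ) : WithTop ℝ)
          + tropISS (timeWarp n z) (j - 1) (T + 1) w)
      = (Finset.Ioc s T).inf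
        (fun j => (((a : ℝ) * z j : ℝ) : WithTop ℝ) + tropISS z (j - 1) T w)
    set g : ℕ → WithTop ℝ :=
      fun j => (((a : ℝ) * z j : ℝ) : WithTop ℝ) + tropISS z (j - 1) T w with hg
    have hsplit : Finset.Ioc s (T + 1) = Finset.Ioc s n ∪ Finset.Ioc n (T + 1) := by
      rw [Finset.Ioc_union_Ioc_eq_Ioc (by omega) (by omega)]
    rw [hsplit, Finset.inf_union]
    have h1 : (Finset.Ioc s n).inf
        (fun j => (((a : ℝ) * timeWarp n z j : ℝ) : WithTop ℝ)
          + tropISS (timeWarp n z) (j - 1) (T + 1) w) = (Finset.Ioc s n).inf g := by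
      refine Finset.inf_congr rfl ?_
      intro j hj
      simp only [Finset.mem_Ioc] at hj
      simp only [timeWarp, if_pos hj.2, hg]
      rw [ih (j - 1) (by omega)]
    have h2 : (Finset.Ioc n (T + 1)).inf
        (fun j => (((a : ℝ) * timeWarp n z j : ℝ) : WithTop ℝ)
          + tropISS (timeWarp n z) (j - 1) (T + 1) w) = (Finset.Ioc (n - 1) T).inf g := by
      rw [← image_sub_one_Ioc n T hn, Finset.inf_image]
      refine Finset.inf_congr rfl ?_
      intro j hj
      simp only [Finset.mem_Ioc] at hj
      have hjn : ¬ j ≤ n := by omega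
      simp only [Function.comp, timeWarp, if_neg hjn, hg]
      rw [tropISS_warp_ge z T n hn w (j - 1) (by omega)]
    rw [h1, h2, ← Finset.inf_union]
    congr 1
    ext x
    simp only [Finset.mem_union, Finset.mem_Ioc]
    omega

/-- **Time-warping invariance of the tropical non-strict signature.** For a real
sequence `z`, `1 ≤ n ≤ T`, and every word `w` with letters in `ℤ \ {0}`:
`⟨ISS^(idem)_{0,T+1}(τ_n z), w⟩ = ⟨ISS^(idem)_{0,T}(z), w⟩`. -/
theorem trop_issi_time_warping_invariant (z : ℕ → ℝ) (T n : ℕ)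
    (hn : 1 ≤ n) (hnT : n ≤ T) (w : List ℤ) (hw : ∀ a ∈ w, a ≠ 0) :
    tropISS (timeWarp n z) 0 (T + 1) w = tropISS z 0 T w := by
  exact tropISS_warp_lt z T n hn hnT w 0 hn
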